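/- Let $(A, \mathfrak{m})$ be a Noetherian complete local ring and $I_1 \supseteq I_2 \supseteq \cdots$ a descending chain of $\mathfrak{m}$-primary (equivalently, open in the $\mathfrak{m}$-adic topology) ideals. Then either (i) for every $n \in \mathbb{N}$ there exists $i$ with $I_i \subseteq \mathfrak{m}^n$, or (ii) $\bigcap_i I_i \neq (0)$. -/

import Mathlib

/-!
Suppose `⋂ᵢ Iᵢ = 0` but no `Iᵢ` lies in `𝔪 ^ n₀`. Since `A ⧸ 𝔪 ^ n` is Artinian, the chain
`Iᵢ + 𝔪 ^ n` stabilises at some ideal `Jₙ`, and these satisfy `Jₙ ⊆ Jₙ₊₁ + 𝔪 ^ n`. Starting from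
`a ∈ J_{n₀} \ 𝔪 ^ n₀`, successive approximation gives an `𝔪`-adic Cauchy sequence with `n`-th term
in `Jₙ`; by completeness its limit `L` lies in every `Iᵢ + 𝔪 ^ n`, hence in every (open) `Iᵢ`,
so `L = 0`, while `a ≡ L` modulo `𝔪 ^ n₀`.
-/

open IsLocalRing

namespace IsPrecomplete

variable {R M : Type*} [CommRing R] [AddCommGroup M] [Module R M] {I : Ideal R}
  [IsPrecomplete I M]

theorem exists_forall_sub_mem_of_sub_succ_mem (x : ℕ → M)
    (hx : ∀ n, x n - x (n + 1) ∈ I ^ n • (⊤ : Submodule R M)) :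
    ∃ L, ∀ n, x n - L ∈ I ^ n • (⊤ : Submodule R M) := by
  have hcauchy : ∀ {m n}, m ≤ n → x m ≡ x n [SMOD I ^ m • (⊤ : Submodule R M)] := by
    intro m n hmn
    induction n, hmn using Nat.le_induction with
    | base => rfl
    | succ n hmn ih =>
      exact ih.trans <| SModEq.sub_mem.mpr <|
        Submodule.smul_mono_left (Ideal.pow_le_pow_right hmn) (hx n)
  obtain ⟨L, hL⟩ := IsPrecomplete.prec ‹_› hcauchy
  exact ⟨L, fun n => SModEq.sub_mem.mp (hL n)⟩

theorem exists_sub_mem_and_mem_sup_of_le_succ_sup (J : ℕ → Submodule R M)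
    (hJ : ∀ n, J n ≤ J (n + 1) ⊔ I ^ n • ⊤) {n₀ : ℕ} {a : M} (ha : a ∈ J n₀) :
    ∃ L, a - L ∈ I ^ n₀ • (⊤ : Submodule R M) ∧ ∀ n, n₀ ≤ n → L ∈ J n ⊔ I ^ n • ⊤ := by
  have hstep : ∀ n, ∀ b ∈ J n, ∃ c ∈ J (n + 1), b - c ∈ I ^ n • (⊤ : Submodule R M) := by
    intro n b hb
    obtain ⟨c, hc, d, hd, rfl⟩ := Submodule.mem_sup.mp (hJ n hb)
    exact ⟨c, hc, by simpa using hd⟩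
  choose! next hnext_mem hnext_sub using hstep
  let x : ℕ → M := fun n => Nat.rec a (fun k xk => if k < n₀ then xk else next k xk) n
  have hx_succ : ∀ k, x (k + 1) = if k < n₀ then x k else next k (x k) := fun _ => rfl
  have hx_start : ∀ n ≤ n₀, x n = a := by
    intro n hn
    induction n with
    | zero => rfl
    | succ k ih => rw [hx_succ, if_pos (by omega), ih (by omega)]
  have hx_mem : ∀ n, n₀ ≤ n → x n ∈ J n := by
    intro n hn
    induction n, hn using Nat.le_induction with
    | base => rwa [hx_start n₀ le_rfl]
    | succ k hk ih => rw [hx_succ, if_neg (by omega)]; exact hnext_mem k _ ih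
  have hx_sub : ∀ n, x n - x (n + 1) ∈ I ^ n • (⊤ : Submodule R M) := by
    intro n
    rw [hx_succ]
    split_ifs with hn
    · simp
    · exact hnext_sub n _ (hx_mem n (by omega))
  obtain ⟨L, hL⟩ := exists_forall_sub_mem_of_sub_succ_mem x hx_sub
  refine ⟨L, hx_start n₀ le_rfl ▸ hL n₀, fun n hn => ?_⟩
  simpa using Submodule.sub_mem_sup (hx_mem n hn) (hL n)

end IsPrecomplete

theorem Ideal.exists_forall_sup_eq_iInf_sup {A : Type*} [CommRing A] (K : Ideal A)
    [IsArtinianRing (A ⧸ K)] {I : ℕ → Ideal A} (hI : Antitone I) :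
    ∃ i₀, ∀ j, i₀ ≤ j → I j ⊔ K = ⨅ i, I i ⊔ K := by
  obtain ⟨i₀, hi₀⟩ := IsArtinian.monotone_stabilizes
    ⟨fun i => OrderDual.toDual ((I i).map (Ideal.Quotient.mk K)), fun i j hij =>
      Ideal.map_mono (hI hij)⟩
  have hstable : ∀ j, i₀ ≤ j → I j ⊔ K = I i₀ ⊔ K := by
    intro j hj
    have hmap : (I i₀).map (Ideal.Quotient.mk K) = (I j).map (Ideal.Quotient.mk K) :=
      congrArg OrderDual.ofDual (hi₀ j hj)
    have := congrArg (Ideal.comap (Ideal.Quotient.mk K)) hmap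
    rwa [Ideal.comap_map_of_surjective' _ Ideal.Quotient.mk_surjective,
      Ideal.comap_map_of_surjective' _ Ideal.Quotient.mk_surjective, Ideal.mk_ker, eq_comm] at this
  refine ⟨i₀, fun j hj => le_antisymm (le_iInf fun i => ?_) (iInf_le _ j)⟩
  rw [hstable j hj, ← hstable (max i₀ i) (le_max_left _ _)]
  exact sup_le_sup_right (hI (le_max_right _ _)) K

theorem IsLocalRing.isArtinianRing_quotient_maximalIdeal_pow (A : Type*) [CommRing A]
    [IsNoetherianRing A] [IsLocalRing A] (n : ℕ) :
    IsArtinianRing (A ⧸ maximalIdeal A ^ n) := by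
  rcases n.eq_zero_or_pos with rfl | hn
  · rw [pow_zero, Ideal.one_eq_top]
    infer_instance
  refine quotient_artinian_of_mem_minimalPrimes_of_isLocalRing _ ?_
  rw [← Ideal.radical_minimalPrimes, Ideal.radical_pow _ hn.ne',
    (maximalIdeal.isMaximal A).isPrime.radical, Ideal.minimalPrimes_eq_subsingleton_self]
  rfl

namespace IsLocalRing

variable {A : Type*} [CommRing A] [IsNoetherianRing A] [IsLocalRing A] {I : ℕ → Ideal A}

theorem exists_forall_sup_maximalIdeal_pow_eq_iInf (hI : Antitone I) (n : ℕ) :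
    ∃ i₀, ∀ j, i₀ ≤ j → I j ⊔ maximalIdeal A ^ n = ⨅ i, I i ⊔ maximalIdeal A ^ n :=
  have := isArtinianRing_quotient_maximalIdeal_pow A n
  Ideal.exists_forall_sup_eq_iInf_sup _ hI

theorem iInf_sup_maximalIdeal_pow_le_succ_sup (hI : Antitone I) (n : ℕ) :
    ⨅ i, I i ⊔ maximalIdeal A ^ n ≤
      (⨅ i, I i ⊔ maximalIdeal A ^ (n + 1)) ⊔ maximalIdeal A ^ n := by
  obtain ⟨i₀, hi₀⟩ := exists_forall_sup_maximalIdeal_pow_eq_iInf hI n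
  obtain ⟨i₁, hi₁⟩ := exists_forall_sup_maximalIdeal_pow_eq_iInf hI (n + 1)
  rw [← hi₀ (max i₀ i₁) (le_max_left _ _), ← hi₁ (max i₀ i₁) (le_max_right _ _), sup_assoc,
    sup_eq_right.mpr (Ideal.pow_le_pow_right (I := maximalIdeal A) n.le_succ)]

end IsLocalRing

theorem stmt_13 (A : Type*) [CommRing A] [IsNoetherianRing A] [IsLocalRing A]
    [IsAdicComplete (IsLocalRing.maximalIdeal A) A]
    (I : ℕ → Ideal A) (hanti : Antitone I)
    (hopen : ∀ i, ∃ n : ℕ, (IsLocalRing.maximalIdeal A) ^ n ≤ I i) :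
    (∀ n : ℕ, ∃ i, I i ≤ (IsLocalRing.maximalIdeal A) ^ n) ∨ (⨅ i, I i) ≠ ⊥ := by
  set 𝔪 := maximalIdeal A
  refine or_iff_not_imp_right.mpr fun hbot n₀ => ?_
  by_contra! hn₀
  let J : ℕ → Ideal A := fun n => ⨅ i, I i ⊔ 𝔪 ^ n
  have hpow : ∀ n, 𝔪 ^ n • (⊤ : Ideal A) = 𝔪 ^ n := fun n => by
    rw [smul_eq_mul, Ideal.mul_top]
  have hJ : ∀ n, J n ≤ J (n + 1) ⊔ 𝔪 ^ n • ⊤ := fun n => by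
    rw [hpow]
    exact iInf_sup_maximalIdeal_pow_le_succ_sup hanti n
  obtain ⟨i₀, hi₀⟩ := exists_forall_sup_maximalIdeal_pow_eq_iInf hanti n₀
  obtain ⟨a, haJ, ha⟩ := SetLike.not_le_iff_exists.mp fun h : J n₀ ≤ 𝔪 ^ n₀ =>
    hn₀ i₀ (le_sup_left.trans ((hi₀ i₀ le_rfl).trans_le h))
  obtain ⟨L, haL, hL⟩ := IsPrecomplete.exists_sub_mem_and_mem_sup_of_le_succ_sup J hJ haJ
  have hLI : ∀ i, L ∈ I i := fun i => by
    obtain ⟨m, hm⟩ := hopen i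
    have hle : 𝔪 ^ max n₀ m ≤ I i := (Ideal.pow_le_pow_right (le_max_right _ _)).trans hm
    have hJI : J (max n₀ m) ⊔ 𝔪 ^ max n₀ m ≤ I i :=
      sup_le (iInf_le_of_le i (sup_le le_rfl hle)) hle
    exact hJI (hpow _ ▸ hL (max n₀ m) (le_max_left _ _))
  have hL0 : L ∈ ⨅ i, I i := (Submodule.mem_iInf I).mpr hLI
  rw [not_not.mp hbot, Submodule.mem_bot] at hL0
  rw [hpow, hL0, sub_zero] at haL
  exact ha haL
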